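/- Let G be a connected split graph with clique C and independent set I, and H as above. If S is a strong geodetic set of H with z ∉ S, then D = S ∩ V(G) is a dominating set of G. -/

import Mathlib

open SimpleGraph

variable {V : Type*}

/-- A strong geodetic set: there is an assignment of one shortest path to each
(unordered, via the reversal condition) pair of vertices of `S` covering all vertices. -/
def IsStrongGeodeticSet (G : SimpleGraph V) (S : Set V) : Prop :=
  ∃ P : ∀ u v : V, G.Walk u v,
    (∀ u v : V, (P u v).length = G.dist u v) ∧
    (∀ u v : V, P v u = (P u v).reverse) ∧
    (∀ w : V, w ∈ S ∨ ∃ u ∈ S, ∃ v ∈ S, u ≠ v ∧ w ∈ (P u v).support)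

def IsSimplicial (G : SimpleGraph V) (v : V) : Prop := G.IsClique (G.neighborSet v)

/-- The extension of a graph G by one pendant vertex per vertex of G
(second summand) and one universal vertex z (third summand). -/
def splitExt (G : SimpleGraph V) : SimpleGraph (V ⊕ (V ⊕ Unit)) where
  Adj a b :=
    match a, b with
    | Sum.inl u, Sum.inl v => G.Adj u v
    | Sum.inl u, Sum.inr (Sum.inl v) => u = v
    | Sum.inr (Sum.inl v), Sum.inl u => u = v
    | Sum.inr (Sum.inl _), Sum.inr (Sum.inl _) => False
    | Sum.inr (Sum.inr _), Sum.inr (Sum.inr _) => False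
    | Sum.inr (Sum.inr _), _ => True
    | _, Sum.inr (Sum.inr _) => True
  symm := by
    refine ⟨?_⟩
    rintro (u | v | z) (u' | v' | z') h <;> simp_all <;> exact G.symm.symm _ _ h
  loopless := by
    refine ⟨?_⟩
    rintro (u | v | z) h
    · exact G.loopless.irrefl u h
    · exact h
    · exact h

/-- Chordality: every cycle of length at least 4 has a chord. -/
def IsChordal (G : SimpleGraph V) : Prop :=
  ∀ (v : V) (c : G.Walk v v), c.IsCycle → 4 ≤ c.length →
    ∃ x y : V, x ∈ c.support ∧ y ∈ c.support ∧ G.Adj x y ∧ s(x, y) ∉ c.edges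

def IsDominatingSet (G : SimpleGraph V) (D : Set V) : Prop :=
  ∀ v : V, v ∈ D ∨ ∃ d ∈ D, G.Adj d v

lemma mid_of_walk {W' : Type*} {G : SimpleGraph W'} {u w m : W'} (W : G.Walk u w)
    (hlen : W.length ≤ 2) (hm : m ∈ W.support) (hu : m ≠ u) (hw : m ≠ w) :
    G.Adj u m ∧ G.Adj m w := by
  match W with
  | .nil => simp at hm; exact absurd hm hu
  | .cons h .nil =>
    simp at hm
    rcases hm with h1 | h1
    · exact absurd h1 hu
    · exact absurd h1 hw
  | .cons h (.cons h' .nil) =>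
    simp at hm
    rcases hm with h1 | h1 | h1
    · exact absurd h1 hu
    · subst h1; exact ⟨h, h'⟩
    · exact absurd h1 hw
  | .cons _ (.cons _ (.cons _ _)) =>
    simp [SimpleGraph.Walk.length_cons] at hlen

/-- If S is a strong geodetic set of the split extension H not containing the universal
vertex z, then the original vertices of S form a dominating set of G. -/
theorem splitExt_dominating_of_strongGeodeticSet (G : SimpleGraph V) (hG : G.Connected)
    (C : Set V) (hC : G.IsClique C) (hI : ∀ u ∈ Cᶜ, ∀ v ∈ Cᶜ, ¬ G.Adj u v)
    (S : Set (V ⊕ (V ⊕ Unit))) (hS : IsStrongGeodeticSet (splitExt G) S)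
    (hz : Sum.inr (Sum.inr ()) ∉ S) :
    IsDominatingSet G {v : V | Sum.inl v ∈ S} := by
  intro v
  by_cases hv : Sum.inl v ∈ S
  · exact Or.inl hv
  right
  obtain ⟨P, hlen, hrev, hcov⟩ := hS
  rcases hcov (Sum.inl v) with h | ⟨u, hu, w, hw, huw, hsup⟩
  · exact absurd h hv
  have hadjz : ∀ a : V ⊕ (V ⊕ Unit), a ≠ Sum.inr (Sum.inr ()) →
      (splitExt G).Adj a (Sum.inr (Sum.inr ())) := by
    rintro (a | a | ⟨⟩) h
    · trivial
    · trivial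
    · exact absurd rfl h
  have huz : u ≠ Sum.inr (Sum.inr ()) := fun h => hz (h ▸ hu)
  have hwz : w ≠ Sum.inr (Sum.inr ()) := fun h => hz (h ▸ hw)
  have hdist : (splitExt G).dist u w ≤ 2 := by
    simpa using SimpleGraph.dist_le
      (SimpleGraph.Walk.cons (hadjz u huz)
        (SimpleGraph.Walk.cons ((hadjz w hwz).symm) SimpleGraph.Walk.nil))
  have hlen2 : (P u w).length ≤ 2 := (hlen u w).le.trans hdist
  have hvu : (Sum.inl v : V ⊕ (V ⊕ Unit)) ≠ u := fun h => hv (h ▸ hu)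
  have hvw : (Sum.inl v : V ⊕ (V ⊕ Unit)) ≠ w := fun h => hv (h ▸ hw)
  obtain ⟨h1, h2⟩ := mid_of_walk (P u w) hlen2 hsup hvu hvw
  rcases hu' : u with n | n | ⟨⟩ <;> rcases hw' : w with p | p | ⟨⟩ <;> subst hu' hw'
  · exact ⟨n, hu, h1⟩
  · exact ⟨n, hu, h1⟩
  · exact absurd rfl hwz
  · exact ⟨p, hw, h2.symm⟩
  · exfalso
    have hn : v = n := h1
    have hp : v = p := h2
    exact huw (by rw [← hn, ← hp])
  · exact absurd rfl hwz
  · exact absurd rfl huz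
  · exact absurd rfl huz
  · exact absurd rfl huz
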